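/- Let F be a field and let M(x)=[A(x)|B(x)] be a bipartite pattern matrix in n unknowns with generic ranks r_A, r_B, r_M. Let 𝒜 be a largest left matchbox and ℬ a largest right matchbox such that v(𝒜,ℬ) is minimal among all pairs consisting of a largest left matchbox and a largest right matchbox. Then |𝒜| = r_A, |ℬ| = r_B, and |𝒜⋓ℬ| = r_M. -/

import Mathlib

open Matrix

/-- A position in the bipartite pattern: either an entry of the `m × p` A-block
or an entry of the `m × q` B-block. -/
abbrev BipPos (m p q : ℕ) := (Fin m × Fin p) ⊕ (Fin m × Fin q)

/-- The row index of a position. -/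
def posRow {m p q : ℕ} : BipPos m p q → Fin m := Sum.elim Prod.fst Prod.fst

/-- The column index of a position (as a column of the block matrix `[A|B]`). -/
def posCol {m p q : ℕ} : BipPos m p q → Fin p ⊕ Fin q := Sum.map Prod.snd Prod.snd

/-- The A-block of the pattern matrix, at the substitution `a`. -/
def patA {m p q n : ℕ} (pos : Fin n → BipPos m p q) {R : Type*} [CommRing R]
    (a : Fin n → R) : Matrix (Fin m) (Fin p) R :=
  Matrix.of fun i j => ∑ l : Fin n, if pos l = Sum.inl (i, j) then a l else 0

/-- The B-block of the pattern matrix, at the substitution `a`. -/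
def patB {m p q n : ℕ} (pos : Fin n → BipPos m p q) {R : Type*} [CommRing R]
    (a : Fin n → R) : Matrix (Fin m) (Fin q) R :=
  Matrix.of fun i k => ∑ l : Fin n, if pos l = Sum.inr (i, k) then a l else 0

/-- The full bipartite pattern matrix `M = [A | B]` at the substitution `a`. -/
def patM {m p q n : ℕ} (pos : Fin n → BipPos m p q) {R : Type*} [CommRing R]
    (a : Fin n → R) : Matrix (Fin m) (Fin p ⊕ Fin q) R :=
  Matrix.fromCols (patA pos a) (patB pos a)

/-- The generic point: the variables `x₁, …, xₙ` viewed in the field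
`K = F(x₁,…,xₙ)` of rational functions. -/
noncomputable def genericX (F : Type*) [Field F] (n : ℕ) :
    Fin n → FractionRing (MvPolynomial (Fin n) F) :=
  fun l => algebraMap (MvPolynomial (Fin n) F) (FractionRing (MvPolynomial (Fin n) F))
    (MvPolynomial.X l)

/-- The generic rank `r_A` of the A-block. -/
noncomputable def genRankA (F : Type*) [Field F] {m p q n : ℕ}
    (pos : Fin n → BipPos m p q) : ℕ :=
  (patA pos (genericX F n)).rank

/-- The generic rank `r_B` of the B-block. -/
noncomputable def genRankB (F : Type*) [Field F] {m p q n : ℕ}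
    (pos : Fin n → BipPos m p q) : ℕ :=
  (patB pos (genericX F n)).rank

/-- The generic rank `r_M` of `M = [A | B]`. -/
noncomputable def genRankM (F : Type*) [Field F] {m p q n : ℕ}
    (pos : Fin n → BipPos m p q) : ℕ :=
  (patM pos (genericX F n)).rank

/-- Equivalence of bipartite matrices: `[A'|B'] = [S·A·R₁ | S·B·R₂]` with
`S, R₁, R₂` invertible. -/
def BipEquiv {F : Type*} [Field F] {m p q : ℕ}
    (A : Matrix (Fin m) (Fin p) F) (B : Matrix (Fin m) (Fin q) F)
    (A' : Matrix (Fin m) (Fin p) F) (B' : Matrix (Fin m) (Fin q) F) : Prop :=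
  ∃ (S : Matrix (Fin m) (Fin m) F) (R₁ : Matrix (Fin p) (Fin p) F)
    (R₂ : Matrix (Fin q) (Fin q) F),
    IsUnit S ∧ IsUnit R₁ ∧ IsUnit R₂ ∧ A' = S * A * R₁ ∧ B' = S * B * R₂

/-- The A-block of the canonical bipartite matrix `C(r,s,t)`:
`I_r` in rows `1..r`, columns `1..r`, and `I_s` in rows `r+1..r+s`,
columns `r+1..r+s`. -/
def canonA (F : Type*) [Field F] (m p r s : ℕ) : Matrix (Fin m) (Fin p) F :=
  Matrix.of fun i j => if (i : ℕ) = (j : ℕ) ∧ (i : ℕ) < r + s then 1 else 0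

/-- The B-block of the canonical bipartite matrix `C(r,s,t)`:
`I_r` in rows `1..r`, columns `t+1..t+r`, and `I_t` in rows `r+s+1..r+s+t`,
columns `1..t`. -/
def canonB (F : Type*) [Field F] (m q r s t : ℕ) : Matrix (Fin m) (Fin q) F :=
  Matrix.of fun i k =>
    if ((i : ℕ) < r ∧ (k : ℕ) = t + (i : ℕ)) ∨
       (r + s ≤ (i : ℕ) ∧ (i : ℕ) < r + s + t ∧ (k : ℕ) + (r + s) = (i : ℕ)) then 1 else 0

/-- A matchbox: a set of pattern positions, no two sharing a row index and no two
within the same block sharing a column index. -/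
def IsMatchbox {m p q n : ℕ} (pos : Fin n → BipPos m p q) (S : Finset (Fin n)) : Prop :=
  ∀ l ∈ S, ∀ l' ∈ S, l ≠ l' →
    posRow (pos l) ≠ posRow (pos l') ∧ posCol (pos l) ≠ posCol (pos l')

/-- A left matchbox: a matchbox all of whose positions lie in the A-block. -/
def IsLeftMatchbox {m p q n : ℕ} (pos : Fin n → BipPos m p q) (S : Finset (Fin n)) : Prop :=
  IsMatchbox pos S ∧ ∀ l ∈ S, (pos l).isLeft

/-- A right matchbox: a matchbox all of whose positions lie in the B-block. -/
def IsRightMatchbox {m p q n : ℕ} (pos : Fin n → BipPos m p q) (S : Finset (Fin n)) : Prop :=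
  IsMatchbox pos S ∧ ∀ l ∈ S, (pos l).isRight

/-- A largest left matchbox. -/
def IsLargestLeft {m p q n : ℕ} (pos : Fin n → BipPos m p q) (S : Finset (Fin n)) : Prop :=
  IsLeftMatchbox pos S ∧ ∀ T : Finset (Fin n), IsLeftMatchbox pos T → T.card ≤ S.card

/-- A largest right matchbox. -/
def IsLargestRight {m p q n : ℕ} (pos : Fin n → BipPos m p q) (S : Finset (Fin n)) : Prop :=
  IsRightMatchbox pos S ∧ ∀ T : Finset (Fin n), IsRightMatchbox pos T → T.card ≤ S.card

/-- The set of row indices met by the positions of `S`. -/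
def rowSet {m p q n : ℕ} (pos : Fin n → BipPos m p q) (S : Finset (Fin n)) : Finset (Fin m) :=
  S.image fun l => posRow (pos l)

/-- `v(𝒜,ℬ)`: the number of row indices met by both `𝒜` and `ℬ`. -/
def vCommon {m p q n : ℕ} (pos : Fin n → BipPos m p q) (𝒜 ℬ : Finset (Fin n)) : ℕ :=
  (rowSet pos 𝒜 ∩ rowSet pos ℬ).card

/-- `𝒜 ⋓ ℬ`: `𝒜` together with those positions of `ℬ` whose row is not a row of `𝒜`. -/
def mcup {m p q n : ℕ} (pos : Fin n → BipPos m p q) (𝒜 ℬ : Finset (Fin n)) : Finset (Fin n) :=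
  𝒜 ∪ ℬ.filter fun l => posRow (pos l) ∉ rowSet pos 𝒜

/-- An optimal pair: a largest left matchbox and a largest right matchbox whose number of
common row indices is minimal among all such pairs. -/
def IsOptimalPair {m p q n : ℕ} (pos : Fin n → BipPos m p q) (𝒜 ℬ : Finset (Fin n)) : Prop :=
  IsLargestLeft pos 𝒜 ∧ IsLargestRight pos ℬ ∧
  ∀ 𝒜' ℬ' : Finset (Fin n), IsLargestLeft pos 𝒜' → IsLargestRight pos ℬ' →
    vCommon pos 𝒜 ℬ ≤ vCommon pos 𝒜' ℬ'

/-- The characteristic vector `ε_S ∈ {0,1}ⁿ` of a set of labels. -/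
def charVec (F : Type*) [Zero F] [One F] {n : ℕ} (S : Finset (Fin n)) : Fin n → F :=
  fun l => if l ∈ S then 1 else 0

/-- The minor `μ_S(x)` of `M(x)` on the rows and the columns met by the matchbox `S`
(as a polynomial; well defined up to sign, rows and columns being indexed by `S`). -/
noncomputable def minorX (F : Type*) [Field F] {m p q n : ℕ} (pos : Fin n → BipPos m p q)
    (S : Finset (Fin n)) : MvPolynomial (Fin n) F :=
  (Matrix.of fun (l : S) (l' : S) =>
    patM pos (fun i => (MvPolynomial.X i : MvPolynomial (Fin n) F))
      (posRow (pos l)) (posCol (pos l'))).det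

/-!
The generic rank of a pattern matrix is the size of its largest matchboxes. A matchbox `S`
gives the minor `minorX F pos S`, which is `1` at the characteristic vector of `S`; conversely a
nonzero minor has a nonzero term in its Leibniz expansion, and that term is a matchbox. The rows of
a left matchbox are independent rows of `A(x)`, so they extend to a basis of its row space and
then to a nonsingular `r_A × r_A` minor: the rows of every left matchbox are among the rows of a
largest one, and likewise on the right.

Thus `|𝒜| = r_A`, `|ℬ| = r_B`, and `𝒜 ⋓ ℬ` is a matchbox of `M`, so
`|𝒜 ⋓ ℬ| = r_A + r_B - v(𝒜,ℬ) ≤ r_M`. Conversely, split a largest matchbox of `M` into its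
left and right parts and extend both to largest matchboxes `𝒜'`, `ℬ'`. The two parts meet
disjoint sets of rows, so `v(𝒜',ℬ') ≤ r_A + r_B - r_M`, and the minimality of `v(𝒜,ℬ)` concludes.
-/

open Function

namespace Matrix

variable {K R C ι : Type*} [Field K] [Fintype ι] [DecidableEq ι]

theorem card_le_rank_of_det_submatrix_ne_zero [Fintype C] (X : Matrix R C K) {r : ι → R}
    {c : ι → C} (h : (X.submatrix r c).det ≠ 0) : Fintype.card ι ≤ X.rank :=
  (rank_of_det_ne_zero h).symm.trans_le (X.rank_submatrix_le r c)

theorem linearIndependent_rows_of_det_submatrix_ne_zero (X : Matrix R C K) {r : ι → R}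
    {c : ι → C} (h : (X.submatrix r c).det ≠ 0) : LinearIndependent K fun i => X (r i) :=
  (linearIndependent_rows_of_det_ne_zero h).of_comp (LinearMap.funLeft K K c)

theorem exists_perm_forall_ne_zero_of_det_ne_zero {R : Type*} [CommRing R] {M : Matrix ι ι R}
    (h : M.det ≠ 0) : ∃ σ : Equiv.Perm ι, ∀ i, M (σ i) i ≠ 0 := by
  contrapose! h
  rw [det_apply]
  refine Finset.sum_eq_zero fun σ _ => ?_
  obtain ⟨i, hi⟩ := h σ
  exact smul_eq_zero_of_right _ (Finset.prod_eq_zero (Finset.mem_univ i) hi)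

variable [Fintype R] [Fintype C]

theorem exists_finset_linearIndepOn_card_eq_rank (X : Matrix R C K) {s : Set R}
    (hs : LinearIndepOn K X s) :
    ∃ b : Finset R, s ⊆ b ∧ LinearIndepOn K X (b : Set R) ∧ b.card = X.rank := by
  classical
  obtain ⟨b, -, hsb, hspan, hb⟩ := exists_linearIndepOn_extension hs (Set.subset_univ s)
  refine ⟨b.toFinset, by simpa using hsb, by simpa using hb, ?_⟩
  have hspan_eq : Submodule.span K (Set.range X.row) =
      Submodule.span K (Set.range fun i : b => X i) :=
    le_antisymm (Submodule.span_le.mpr (Set.image_eq_range X b ▸ Set.image_univ ▸ hspan))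
      (Submodule.span_mono fun _ ⟨i, hi⟩ => ⟨i, hi⟩)
  rw [X.rank_eq_finrank_span_row, hspan_eq, finrank_span_eq_card hb, Set.toFinset_card]

theorem exists_submatrix_det_ne_zero (X : Matrix R C K) {s : Set R}
    (hs : LinearIndepOn K X s) :
    ∃ (r : Fin X.rank → R) (c : Fin X.rank → C), Injective r ∧ Injective c ∧
      s ⊆ Set.range r ∧ (X.submatrix r c).det ≠ 0 := by
  classical
  obtain ⟨b, hsb, hb, hbcard⟩ := X.exists_finset_linearIndepOn_card_eq_rank hs
  let Y := X.submatrix (Subtype.val : b → R) id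
  have hYrank : Yᵀ.rank = X.rank := by
    rw [rank_transpose, (show LinearIndependent K Y.row from hb).rank_matrix, Fintype.card_coe,
      hbcard]
  obtain ⟨d, -, hd, hdcard⟩ :=
    Yᵀ.exists_finset_linearIndepOn_card_eq_rank (linearIndepOn_empty K _)
  let eb : Fin X.rank ≃ b := (Fintype.equivFinOfCardEq (by simp [hbcard])).symm
  let ed : Fin X.rank ≃ d := (Fintype.equivFinOfCardEq (by simp [hdcard, hYrank])).symm
  refine ⟨Subtype.val ∘ eb, Subtype.val ∘ ed, Subtype.val_injective.comp eb.injective,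
    Subtype.val_injective.comp ed.injective, fun i hi => ⟨eb.symm ⟨i, hsb hi⟩, by simp⟩, ?_⟩
  have hcols : LinearIndependent K (X.submatrix (Subtype.val ∘ eb) (Subtype.val ∘ ed)).col :=
    (hd.comp ed ed.injective).map' (LinearMap.funLeft K K eb)
      (LinearMap.ker_eq_bot.mpr (LinearMap.funLeft_injective_of_surjective _ _ _ eb.surjective))
  exact ((isUnit_iff_isUnit_det _).mp (linearIndependent_cols_iff_isUnit.mp hcols)).ne_zero

end Matrix

theorem Finset.card_inter_add_card_add_card_le {α : Type*} [DecidableEq α] {I J I₀ J₀ : Finset α}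
    (hI : I₀ ⊆ I) (hJ : J₀ ⊆ J) (hd : Disjoint I₀ J₀) :
    (I ∩ J).card + I₀.card + J₀.card ≤ I.card + J.card := by
  have hsub : I ∩ J ⊆ (I \ I₀) ∪ (J \ J₀) := fun x hx => by
    simp only [mem_inter, mem_union, mem_sdiff] at hx ⊢
    by_cases hxI₀ : x ∈ I₀
    · exact Or.inr ⟨hx.2, disjoint_left.mp hd hxI₀⟩
    · exact Or.inl ⟨hx.1, hxI₀⟩
  have := (card_le_card hsub).trans (card_union_le _ _)
  have := card_sdiff_add_card_eq_card hI
  have := card_sdiff_add_card_eq_card hJ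
  omega

section Pattern

variable {m p q n : ℕ} (pos : Fin n → BipPos m p q)

lemma patM_apply {R : Type*} [CommRing R] (a : Fin n → R) (i : Fin m) (c : Fin p ⊕ Fin q) :
    patM pos a i c =
      ∑ l, if posRow (pos l) = i ∧ posCol (pos l) = c then a l else 0 := by
  cases c <;>
  · simp only [patM, patA, patB, fromCols_apply_inl, fromCols_apply_inr, of_apply]
    refine Finset.sum_congr rfl fun l _ => if_congr ?_ rfl rfl
    rcases pos l with ⟨i', j'⟩ | ⟨i', k'⟩ <;> simp [posRow, posCol, and_comm]

lemma patM_map {R R' : Type*} [CommRing R] [CommRing R'] (f : R →+* R') (a : Fin n → R) :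
    patM pos (fun l => f (a l)) = (patM pos a).map f := by
  ext i c
  simp only [map_apply, patM_apply, map_sum, apply_ite f, map_zero]

variable (F : Type*) [Field F]

lemma eval_minorX_charVec {S : Finset (Fin n)} (hS : IsMatchbox pos S) :
    MvPolynomial.eval (charVec F S) (minorX F pos S) = 1 := by
  classical
  rw [minorX, RingHom.map_det, ← det_one (R := F) (n := S)]
  congr 1
  ext l l'
  simp only [RingHom.mapMatrix_apply, map_apply, of_apply, patM_apply, map_sum, apply_ite,
    MvPolynomial.eval_X, map_zero]
  rw [Finset.sum_eq_single l.1 (fun l'' _ hne => ?_) (by simp)]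
  · by_cases h : l = l'
    · subst h
      simp [charVec]
    · have hcol := (hS l l.2 l' l'.2 (Subtype.coe_ne_coe.mpr h)).2
      simp [hcol, one_apply_ne h]
  · by_cases hl'' : l'' ∈ S
    · exact if_neg fun h => (hS l'' hl'' l l.2 hne).1 h.1
    · simp [charVec, hl'']

lemma minorX_ne_zero {S : Finset (Fin n)} (hS : IsMatchbox pos S) :
    minorX F pos S ≠ 0 := fun h =>
  one_ne_zero (by rw [← eval_minorX_charVec pos F hS, h, map_zero])

lemma det_genericX_submatrix_ne_zero {S : Finset (Fin n)} (hS : IsMatchbox pos S) :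
    ((patM pos (genericX F n)).submatrix (fun l : S => posRow (pos l))
      (fun l : S => posCol (pos l))).det ≠ 0 := by
  let φ := algebraMap (MvPolynomial (Fin n) F) (FractionRing (MvPolynomial (Fin n) F))
  have hφ : ((patM pos (genericX F n)).submatrix (fun l : S => posRow (pos l))
      (fun l : S => posCol (pos l))).det = φ (minorX F pos S) := by
    rw [show genericX F n = fun l => φ (MvPolynomial.X l) from rfl, patM_map, submatrix_map,
      minorX, RingHom.map_det]
    rfl
  rw [hφ]
  exact (map_ne_zero_iff φ (IsFractionRing.injective _ _)).mpr (minorX_ne_zero pos F hS)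

theorem exists_isMatchbox_of_det_submatrix_ne_zero {R : Type*} [CommRing R] (a : Fin n → R)
    {ι : Type*} [Fintype ι] [DecidableEq ι] {r : ι → Fin m} {c : ι → Fin p ⊕ Fin q}
    (hr : Injective r) (hc : Injective c)
    (h : ((patM pos a).submatrix r c).det ≠ 0) :
    ∃ S, IsMatchbox pos S ∧ S.card = Fintype.card ι ∧ rowSet pos S = Finset.univ.image r ∧
      ∀ l ∈ S, posCol (pos l) ∈ Set.range c := by
  classical
  obtain ⟨σ, hσ⟩ := exists_perm_forall_ne_zero_of_det_ne_zero h
  have hentry : ∀ i, ∃ l, posRow (pos l) = r (σ i) ∧ posCol (pos l) = c i := fun i => by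
    have hi := hσ i
    rw [submatrix_apply, patM_apply] at hi
    obtain ⟨l, -, hl⟩ := Finset.exists_ne_zero_of_sum_ne_zero hi
    exact ⟨l, of_not_not fun h => hl (if_neg h)⟩
  choose L hLrow hLcol using hentry
  have hL : Injective L := fun i i' h => hc (by rw [← hLcol, ← hLcol, h])
  refine ⟨Finset.univ.image L, ?_, ?_, ?_, ?_⟩
  · simp only [IsMatchbox, Finset.mem_image, Finset.mem_univ, true_and]
    rintro _ ⟨i, rfl⟩ _ ⟨i', rfl⟩ hne
    have hii : i ≠ i' := fun h => hne (h ▸ rfl)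
    rw [hLrow, hLrow, hLcol, hLcol]
    exact ⟨(hr.comp σ.injective).ne hii, hc.ne hii⟩
  · rw [Finset.card_image_of_injective _ hL, Finset.card_univ]
  · ext x
    simp only [rowSet, Finset.image_image, Function.comp_def, hLrow, Finset.mem_image,
      Finset.mem_univ, true_and]
    exact ⟨fun ⟨i, hi⟩ => ⟨σ i, hi⟩, fun ⟨j, hj⟩ => ⟨σ.symm j, by simpa using hj⟩⟩
  · simp only [Finset.mem_image, Finset.mem_univ, true_and]
    rintro _ ⟨i, rfl⟩
    exact ⟨i, (hLcol i).symm⟩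

end Pattern

section Matchbox

variable {m p q n : ℕ} {pos : Fin n → BipPos m p q} {S T : Finset (Fin n)}

lemma IsMatchbox.subset (hT : IsMatchbox pos T) (hST : S ⊆ T) : IsMatchbox pos S :=
  fun l hl l' hl' => hT l (hST hl) l' (hST hl')

lemma IsMatchbox.injOn_row (hS : IsMatchbox pos S) :
    Set.InjOn (fun l => posRow (pos l)) S :=
  fun l hl l' hl' h => by_contra fun hne => (hS l hl l' hl' hne).1 h

lemma IsMatchbox.card_rowSet (hS : IsMatchbox pos S) : (rowSet pos S).card = S.card :=
  Finset.card_image_of_injOn hS.injOn_row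

lemma IsMatchbox.union (hS : IsMatchbox pos S) (hT : IsMatchbox pos T)
    (hST : ∀ l ∈ S, ∀ l' ∈ T, posRow (pos l) ≠ posRow (pos l') ∧ posCol (pos l) ≠ posCol (pos l')) :
    IsMatchbox pos (S ∪ T) := by
  intro l hl l' hl' hne
  rcases Finset.mem_union.mp hl with hl | hl <;> rcases Finset.mem_union.mp hl' with hl' | hl'
  · exact hS l hl l' hl' hne
  · exact hST l hl l' hl'
  · exact (hST l' hl' l hl).imp Ne.symm Ne.symm
  · exact hT l hl l' hl' hne

lemma posCol_ne_of_isLeft_of_isRight {P P' : BipPos m p q} (hP : P.isLeft) (hP' : P'.isRight) :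
    posCol P ≠ posCol P' := by
  rcases P with _ | _ <;> rcases P' with _ | _ <;> simp_all [posCol]

lemma isMatchbox_mcup {𝒜 ℬ : Finset (Fin n)} (hA : IsLeftMatchbox pos 𝒜)
    (hB : IsRightMatchbox pos ℬ) : IsMatchbox pos (mcup pos 𝒜 ℬ) := by
  refine hA.1.union (hB.1.subset (Finset.filter_subset _ _)) fun l hl l' hl' => ?_
  rw [Finset.mem_filter] at hl'
  exact ⟨fun h => hl'.2 (h ▸ Finset.mem_image_of_mem _ hl),
    posCol_ne_of_isLeft_of_isRight (hA.2 l hl) (hB.2 l' hl'.1)⟩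

lemma card_mcup_add_vCommon (𝒜 : Finset (Fin n)) {ℬ : Finset (Fin n)} (hB : IsMatchbox pos ℬ) :
    (mcup pos 𝒜 ℬ).card + vCommon pos 𝒜 ℬ = 𝒜.card + ℬ.card := by
  classical
  have hdisj : Disjoint 𝒜 (ℬ.filter fun l => posRow (pos l) ∉ rowSet pos 𝒜) :=
    Finset.disjoint_right.mpr fun l hl hl𝒜 =>
      (Finset.mem_filter.mp hl).2 (Finset.mem_image_of_mem _ hl𝒜)
  have hcommon : vCommon pos 𝒜 ℬ = (ℬ.filter fun l => posRow (pos l) ∈ rowSet pos 𝒜).card := by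
    unfold vCommon rowSet
    rw [Finset.inter_comm, ← Finset.filter_mem_eq_inter, Finset.filter_image]
    exact Finset.card_image_of_injOn (hB.injOn_row.mono (Finset.filter_subset _ _))
  have hsplit := Finset.card_filter_add_card_filter_not (s := ℬ)
    fun l => posRow (pos l) ∈ rowSet pos 𝒜
  rw [mcup, Finset.card_union_of_disjoint hdisj, hcommon]
  omega

theorem IsMatchbox.exists_left_right_split (hS : IsMatchbox pos S) :
    ∃ SA SB, IsLeftMatchbox pos SA ∧ IsRightMatchbox pos SB ∧
      Disjoint (rowSet pos SA) (rowSet pos SB) ∧ SA.card + SB.card = S.card := by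
  refine ⟨S.filter fun l => (pos l).isLeft, S.filter fun l => ¬(pos l).isLeft,
    ⟨hS.subset (Finset.filter_subset _ _), fun l hl => (Finset.mem_filter.mp hl).2⟩,
    ⟨hS.subset (Finset.filter_subset _ _), fun l hl => by simpa using (Finset.mem_filter.mp hl).2⟩,
    ?_, Finset.card_filter_add_card_filter_not _⟩
  simp only [rowSet, Finset.disjoint_left, Finset.mem_image, Finset.mem_filter]
  rintro _ ⟨l, ⟨hl, hleft⟩, rfl⟩ ⟨l', ⟨hl', hright⟩, hrow⟩
  exact (hS l' hl' l hl (by rintro rfl; exact hright hleft)).1 hrow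

/-- Left, right and arbitrary matchboxes are the cases `e = Sum.inl`, `Sum.inr`, `id`. -/
def IsMatchboxIn (pos : Fin n → BipPos m p q) {κ : Type*} (e : κ → Fin p ⊕ Fin q)
    (S : Finset (Fin n)) : Prop :=
  IsMatchbox pos S ∧ ∀ l ∈ S, posCol (pos l) ∈ Set.range e

lemma isMatchboxIn_empty {κ : Type*} {e : κ → Fin p ⊕ Fin q} : IsMatchboxIn pos e ∅ := by
  simp [IsMatchboxIn, IsMatchbox]

lemma isLeftMatchbox_iff : IsLeftMatchbox pos S ↔ IsMatchboxIn pos Sum.inl S := by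
  refine and_congr_right fun _ => forall₂_congr fun l _ => ?_
  rcases pos l with _ | _ <;> simp [posCol]

lemma isRightMatchbox_iff : IsRightMatchbox pos S ↔ IsMatchboxIn pos Sum.inr S := by
  refine and_congr_right fun _ => forall₂_congr fun l _ => ?_
  rcases pos l with _ | _ <;> simp [posCol]

lemma isMatchbox_iff_isMatchboxIn_id : IsMatchbox pos S ↔ IsMatchboxIn pos id S := by
  simp [IsMatchboxIn]

end Matchbox

section GenericRank

variable {m p q n : ℕ} {pos : Fin n → BipPos m p q} (F : Type*) [Field F]
  {κ : Type*} {e : κ → Fin p ⊕ Fin q} {S : Finset (Fin n)}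

lemma genRankA_eq_rank_submatrix :
    genRankA F pos = ((patM pos (genericX F n)).submatrix id Sum.inl).rank := rfl

lemma genRankB_eq_rank_submatrix :
    genRankB F pos = ((patM pos (genericX F n)).submatrix id Sum.inr).rank := rfl

lemma genRankM_eq_rank_submatrix :
    genRankM F pos = ((patM pos (genericX F n)).submatrix id id).rank := rfl

lemma IsMatchboxIn.exists_det_submatrix_ne_zero (hS : IsMatchboxIn pos e S) :
    ∃ c : S → κ, (((patM pos (genericX F n)).submatrix id e).submatrix
      (fun l : S => posRow (pos l)) c).det ≠ 0 := by
  choose c hc using hS.2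
  refine ⟨fun l => c l l.2, ?_⟩
  simpa only [submatrix_submatrix, Function.comp_def, id, hc]
    using det_genericX_submatrix_ne_zero pos F hS.1

variable [Fintype κ]

theorem IsMatchboxIn.card_le_rank (hS : IsMatchboxIn pos e S) :
    S.card ≤ ((patM pos (genericX F n)).submatrix id e).rank := by
  obtain ⟨c, hc⟩ := hS.exists_det_submatrix_ne_zero F
  simpa using card_le_rank_of_det_submatrix_ne_zero _ hc

theorem IsMatchboxIn.exists_rowSet_subset_card_eq_rank (he : Injective e)
    (hS : IsMatchboxIn pos e S) :
    ∃ T, IsMatchboxIn pos e T ∧ T.card = ((patM pos (genericX F n)).submatrix id e).rank ∧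
      rowSet pos S ⊆ rowSet pos T := by
  classical
  obtain ⟨c, hc⟩ := hS.exists_det_submatrix_ne_zero F
  have hrows := (linearIndepOn_range_iff hS.1.injOn_row.injective _).mpr
    (linearIndependent_rows_of_det_submatrix_ne_zero _ hc)
  obtain ⟨r, c', hr, hc', hsub, hdet⟩ := exists_submatrix_det_ne_zero _ hrows
  obtain ⟨T, hT, hcard, hrowT, hcolT⟩ :=
    exists_isMatchbox_of_det_submatrix_ne_zero pos _ hr (he.comp hc') hdet
  refine ⟨T, ⟨hT, fun l hl => ?_⟩, hcard.trans (Fintype.card_fin _), fun x hx => ?_⟩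
  · obtain ⟨k, hk⟩ := hcolT l hl
    exact ⟨c' k, hk⟩
  · obtain ⟨l, hl, rfl⟩ := Finset.mem_image.mp hx
    obtain ⟨k, hk⟩ := hsub ⟨⟨l, hl⟩, rfl⟩
    rw [hrowT]
    exact Finset.mem_image.mpr ⟨k, Finset.mem_univ k, hk⟩

theorem IsMatchboxIn.card_eq_rank_of_forall_card_le (he : Injective e)
    (hS : IsMatchboxIn pos e S) (hmax : ∀ T, IsMatchboxIn pos e T → T.card ≤ S.card) :
    S.card = ((patM pos (genericX F n)).submatrix id e).rank := by
  refine le_antisymm (hS.card_le_rank F) ?_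
  obtain ⟨T, hT, hcard, -⟩ := isMatchboxIn_empty.exists_rowSet_subset_card_eq_rank F he
  exact hcard ▸ hmax T hT

theorem IsLargestLeft.card_eq_genRankA (h : IsLargestLeft pos S) : S.card = genRankA F pos := by
  rw [genRankA_eq_rank_submatrix]
  exact (isLeftMatchbox_iff.mp h.1).card_eq_rank_of_forall_card_le F Sum.inl_injective
    fun T hT => h.2 T (isLeftMatchbox_iff.mpr hT)

theorem IsLargestRight.card_eq_genRankB (h : IsLargestRight pos S) : S.card = genRankB F pos := by
  rw [genRankB_eq_rank_submatrix]
  exact (isRightMatchbox_iff.mp h.1).card_eq_rank_of_forall_card_le F Sum.inr_injective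
    fun T hT => h.2 T (isRightMatchbox_iff.mpr hT)

theorem IsLeftMatchbox.exists_isLargestLeft_rowSet_subset (h : IsLeftMatchbox pos S) :
    ∃ 𝒜, IsLargestLeft pos 𝒜 ∧ rowSet pos S ⊆ rowSet pos 𝒜 := by
  -- The claim is combinatorial: generic ranks over any field, here `ℚ`, witness it.
  obtain ⟨T, hT, hcard, hsub⟩ :=
    (isLeftMatchbox_iff.mp h).exists_rowSet_subset_card_eq_rank ℚ Sum.inl_injective
  exact ⟨T, ⟨isLeftMatchbox_iff.mpr hT,
    fun T' hT' => hcard ▸ (isLeftMatchbox_iff.mp hT').card_le_rank ℚ⟩, hsub⟩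

theorem IsRightMatchbox.exists_isLargestRight_rowSet_subset (h : IsRightMatchbox pos S) :
    ∃ ℬ, IsLargestRight pos ℬ ∧ rowSet pos S ⊆ rowSet pos ℬ := by
  obtain ⟨T, hT, hcard, hsub⟩ :=
    (isRightMatchbox_iff.mp h).exists_rowSet_subset_card_eq_rank ℚ Sum.inr_injective
  exact ⟨T, ⟨isRightMatchbox_iff.mpr hT,
    fun T' hT' => hcard ▸ (isRightMatchbox_iff.mp hT').card_le_rank ℚ⟩, hsub⟩

theorem IsMatchbox.card_le_genRankM (h : IsMatchbox pos S) : S.card ≤ genRankM F pos := by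
  rw [genRankM_eq_rank_submatrix]
  exact (isMatchbox_iff_isMatchboxIn_id.mp h).card_le_rank F

theorem exists_isMatchbox_card_eq_genRankM (pos : Fin n → BipPos m p q) :
    ∃ S, IsMatchbox pos S ∧ S.card = genRankM F pos := by
  obtain ⟨S, hS, hcard, -⟩ := isMatchboxIn_empty.exists_rowSet_subset_card_eq_rank F injective_id
  rw [genRankM_eq_rank_submatrix]
  exact ⟨S, isMatchbox_iff_isMatchboxIn_id.mpr hS, hcard⟩

end GenericRank

theorem exists_isLargest_vCommon_add_genRankM_le {m p q n : ℕ} (F : Type*) [Field F]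
    (pos : Fin n → BipPos m p q) :
    ∃ 𝒜 ℬ, IsLargestLeft pos 𝒜 ∧ IsLargestRight pos ℬ ∧
      vCommon pos 𝒜 ℬ + genRankM F pos ≤ genRankA F pos + genRankB F pos := by
  obtain ⟨𝒞, h𝒞, hcard⟩ := exists_isMatchbox_card_eq_genRankM F pos
  obtain ⟨CA, CB, hCA, hCB, hdisj, hsplit⟩ := h𝒞.exists_left_right_split
  obtain ⟨𝒜, h𝒜, hrowA⟩ := hCA.exists_isLargestLeft_rowSet_subset
  obtain ⟨ℬ, hℬ, hrowB⟩ := hCB.exists_isLargestRight_rowSet_subset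
  refine ⟨𝒜, ℬ, h𝒜, hℬ, ?_⟩
  have hcount := Finset.card_inter_add_card_add_card_le hrowA hrowB hdisj
  rw [hCA.1.card_rowSet, hCB.1.card_rowSet, h𝒜.1.1.card_rowSet, hℬ.1.1.card_rowSet] at hcount
  rw [vCommon, ← hcard, ← hsplit, ← h𝒜.card_eq_genRankA F, ← hℬ.card_eq_genRankB F]
  omega

theorem stmt_7_general (F : Type*) [Field F] (m p q n : ℕ) (pos : Fin n → BipPos m p q)
    (𝒜 ℬ : Finset (Fin n))
    (hopt : IsOptimalPair pos 𝒜 ℬ) :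
    𝒜.card = genRankA F pos ∧ ℬ.card = genRankB F pos ∧
    (mcup pos 𝒜 ℬ).card = genRankM F pos := by
  obtain ⟨h𝒜, hℬ, hmin⟩ := hopt
  obtain ⟨𝒜', ℬ', h𝒜', hℬ', hbound⟩ := exists_isLargest_vCommon_add_genRankM_le F pos
  have hA := h𝒜.card_eq_genRankA F
  have hB := hℬ.card_eq_genRankB F
  have hle := (isMatchbox_mcup h𝒜.1 hℬ.1).card_le_genRankM F
  have hcount := card_mcup_add_vCommon 𝒜 hℬ.1.1
  have hv := hmin 𝒜' ℬ' h𝒜' hℬ'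
  exact ⟨hA, hB, by omega⟩

/-- Lemma 5: for an optimal pair `(𝒜, ℬ)` of largest matchboxes,
`|𝒜| = r_A`, `|ℬ| = r_B`, and `|𝒜⋓ℬ| = r_M`. -/
theorem stmt_7 (F : Type*) [Field F] (m p q n : ℕ) (pos : Fin n → BipPos m p q)
    (hpos : Function.Injective pos) (𝒜 ℬ : Finset (Fin n))
    (hopt : IsOptimalPair pos 𝒜 ℬ) :
    𝒜.card = genRankA F pos ∧ ℬ.card = genRankB F pos ∧
    (mcup pos 𝒜 ℬ).card = genRankM F pos :=
  stmt_7_general F m p q n pos 𝒜 ℬ hopt
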